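/- arXiv:2507.07360 — 6 statements merged into one kernel-verified Lean document; each statement's English description precedes it below -/
import Mathlib

section
/- For every pair (x1, x2) of nonnegative reals with x1 + x2 = 1 and x2 < 1, we have x1^2 * x2 / (2 * (1 - x2^3)) ≤ (2*√3 - 3)/6. -/
theorem stmt0 (x1 x2 : ℝ) (hx1 : 0 ≤ x1) (hx2 : 0 ≤ x2)
    (hsum : x1 + x2 = 1) (hlt : x2 < 1) :
    x1 ^ 2 * x2 / (2 * (1 - x2 ^ 3)) ≤ (2 * Real.sqrt 3 - 3) / 6 := by
  have ht3 : x2 ^ 3 < 1 := pow_lt_one₀ hx2 hlt (by norm_num)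
  have hd : 0 < 2 * (1 - x2 ^ 3) := by nlinarith
  rw [div_le_div_iff₀ hd (by norm_num)]
  have h3 : Real.sqrt 3 ^ 2 = 3 := Real.sq_sqrt (by norm_num)
  have hpos : 0 < Real.sqrt 3 := by positivity
  have key2 : 0 ≤ 2 * Real.sqrt 3 * (x2 ^ 2 + x2 + 1) - (6 * x2 + 3) := by
    nlinarith [sq_nonneg (Real.sqrt 3 * (2 * x2 + 1) - 3), hpos]
  have key3 : 0 ≤ (1 - x2) * (2 * Real.sqrt 3 * (x2 ^ 2 + x2 + 1) - (6 * x2 + 3)) :=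
    mul_nonneg (by linarith) key2
  have hx1e : x1 = 1 - x2 := by linarith
  subst hx1e
  nlinarith [key3]
end

section
/- For all x ∈ (0,1], 3 * x^2 * (1-x) / (1 - (1-x)^3) ≤ 2*√3 - 3, with equality when x = (3 - √3)/2. -/
theorem stmt2 :
    (∀ x : ℝ, 0 < x → x ≤ 1 →
      3 * x ^ 2 * (1 - x) / (1 - (1 - x) ^ 3) ≤ 2 * Real.sqrt 3 - 3) ∧
    3 * ((3 - Real.sqrt 3) / 2) ^ 2 * (1 - (3 - Real.sqrt 3) / 2) /
        (1 - (1 - (3 - Real.sqrt 3) / 2) ^ 3) = 2 * Real.sqrt 3 - 3 := by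
  have hs : Real.sqrt 3 ^ 2 = 3 := Real.sq_sqrt (by norm_num)
  have hs1 : (1:ℝ) < Real.sqrt 3 := by nlinarith [Real.sqrt_nonneg 3]
  constructor
  · intro x hx hx1
    have hden : 0 < 1 - (1 - x) ^ 3 := by
      nlinarith [mul_pos hx (show (0:ℝ) < x^2 - 3*x + 3 by nlinarith [sq_nonneg (x - 3/2)])]
    rw [div_le_iff₀ hden]
    nlinarith [mul_nonneg hx.le (sq_nonneg (x - (3 - Real.sqrt 3) / 2)),
      Real.sqrt_nonneg 3]
  · have hden : (1 : ℝ) - (1 - (3 - Real.sqrt 3) / 2) ^ 3 ≠ 0 := by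
      nlinarith [Real.sqrt_nonneg 3]
    rw [div_eq_iff hden]
    nlinarith [Real.sqrt_nonneg 3]
end

section
/- The balanced complete 3-partite 3-uniform hypergraph contains no copy of C_5^{3-}, the 3-graph on vertex set {1,2,3,4,5} with edges {123, 234, 345, 451} (a tight 5-cycle minus one edge). -/
open Finset

/-- `H` contains a copy of the 3-graph with edge set `F`. -/
def HasCopy {α β : Type*} [DecidableEq β] (F : Finset (Finset α)) (H : Finset (Finset β)) : Prop :=
  ∃ φ : α → β, Function.Injective φ ∧ ∀ e ∈ F, e.image φ ∈ H

/-- The 3-graph `C_5^{3-}` on 5 vertices: the tight 5-cycle minus one edge,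
with edges 123, 234, 345, 451. -/
def C53minus : Finset (Finset (Fin 5)) := {{0, 1, 2}, {1, 2, 3}, {2, 3, 4}, {3, 4, 0}}

lemma pairlem {V : Type*} [DecidableEq V] (A B C : Finset V)
    (hAB : Disjoint A B) (hAC : Disjoint A C) (hBC : Disjoint B C)
    (x y : V) (hxy : x ≠ y) (a b c : V) (ha : a ∈ A) (hb : b ∈ B) (hc : c ∈ C)
    (hx : x = a ∨ x = b ∨ x = c) (hy : y = a ∨ y = b ∨ y = c) :
    (if x ∈ A then 0 else if x ∈ B then 1 else 2 : ℕ) ≠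
      (if y ∈ A then 0 else if y ∈ B then 1 else 2) := by
  have hbA : b ∉ A := fun h => (Finset.disjoint_left.mp hAB h) hb
  have hcA : c ∉ A := fun h => (Finset.disjoint_left.mp hAC h) hc
  have hcB : c ∉ B := fun h => (Finset.disjoint_left.mp hBC h) hc
  rcases hx with rfl | rfl | rfl <;> rcases hy with rfl | rfl | rfl <;>
    first
      | exact absurd rfl hxy
      | simp [ha, hb, hc, hbA, hcA, hcB]

theorem stmt5 {V : Type*} [DecidableEq V] (A B C : Finset V)
    (hAB : Disjoint A B) (hAC : Disjoint A C) (hBC : Disjoint B C)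
    (hbal1 : A.card = B.card) (hbal2 : B.card = C.card)
    (H : Finset (Finset V))
    (hH : ∀ e, e ∈ H ↔ ∃ a ∈ A, ∃ b ∈ B, ∃ c ∈ C, e = {a, b, c}) :
    ¬ HasCopy C53minus H := by
  rintro ⟨φ, hinj, hcopy⟩
  set col : Fin 5 → ℕ := fun i => if φ i ∈ A then 0 else if φ i ∈ B then 1 else 2 with hcol
  have hbound : ∀ i, col i < 3 := by
    intro i; simp only [hcol]; split_ifs <;> omega
  have hne : ∀ i j : Fin 5, i ≠ j → φ i ≠ φ j := fun i j h => fun he => h (hinj he)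
  -- process an edge
  have hedge : ∀ i j k : Fin 5, ({i, j, k} : Finset (Fin 5)) ∈ C53minus →
      i ≠ j → i ≠ k → j ≠ k →
      col i ≠ col j ∧ col i ≠ col k ∧ col j ≠ col k := by
    intro i j k hmem hij hik hjk
    have h1 := hcopy _ hmem
    have himg : ({i, j, k} : Finset (Fin 5)).image φ = {φ i, φ j, φ k} := by
      simp [Finset.image_insert]
    rw [himg, hH] at h1
    obtain ⟨a, ha, b, hb, c, hc, heq⟩ := h1
    have hmemx : ∀ x ∈ ({φ i, φ j, φ k} : Finset V), x = a ∨ x = b ∨ x = c := by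
      intro x hx
      rw [heq] at hx
      simpa using hx
    have hi := hmemx (φ i) (by simp)
    have hj := hmemx (φ j) (by simp)
    have hk := hmemx (φ k) (by simp)
    exact ⟨pairlem A B C hAB hAC hBC _ _ (hne i j hij) a b c ha hb hc hi hj,
      pairlem A B C hAB hAC hBC _ _ (hne i k hik) a b c ha hb hc hi hk,
      pairlem A B C hAB hAC hBC _ _ (hne j k hjk) a b c ha hb hc hj hk⟩
  obtain ⟨h01, h02, h12⟩ := hedge 0 1 2 (by decide) (by decide) (by decide) (by decide)
  obtain ⟨h13, _, h23⟩ := hedge 1 2 3 (by decide) (by decide) (by decide) (by decide)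
  obtain ⟨h34, h30, _⟩ := hedge 3 4 0 (by decide) (by decide) (by decide) (by decide)
  have b0 := hbound 0; have b1 := hbound 1; have b2 := hbound 2; have b3 := hbound 3
  omega
end

section
/- Define b_rec(n) recursively by b_rec(n) = 0 for n ∈ {0, 1, 2} and b_rec(n) = max over n1 + n2 = n with n1 ≥ 1 of [C(n1, 2) * n2 + b_rec(n2)] for n ≥ 3. Then b_rec(n) / C(n, 3) converges to 2*√3 - 3 as n → ∞. -/
/-!
Splitting `n` vertices as `n - k` and `k` with `k/n → x`, the recursion
`b(n) = max_k (C(n-k, 2) k + b(k))` with the ansatz `b(n) ≈ c n³/6` becomes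
`c = max_x (3(1-x)²x + c x³)`. For `c = 2√3 - 3` the cubic
`c - 3(1-x)²x - c x³` has a double root at `x = (√3 - 1)/2` and is nonnegative on `[0, 1]`,
which gives `bRec n ≤ c n³/6` by induction; splitting at `k = ⌊(√3 - 1)/2 · n⌋` loses only
`O(n²)`, and `C(n, 3) ~ n³/6`.
-/

/-- `bRec n` is the maximum number of edges of an `n`-vertex iterated
semi-bipartite (`B_rec`) construction. -/
def bRec : ℕ → ℕ
  | 0 => 0
  | 1 => 0
  | 2 => 0
  | n + 3 =>
    ((Finset.range (n + 3)).attach).sup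
      (fun x => (n + 3 - x.1).choose 2 * x.1 + bRec x.1)
decreasing_by
  exact Finset.mem_range.mp x.2

open Filter Asymptotics

lemma bRec_of_lt_three {n : ℕ} (hn : n < 3) : bRec n = 0 := by
  interval_cases n <;> rw [bRec]

lemma bRec_of_three_le {n : ℕ} (hn : 3 ≤ n) :
    bRec n = (Finset.range n).attach.sup (fun k => (n - k.1).choose 2 * k.1 + bRec k.1) := by
  obtain ⟨m, rfl⟩ := Nat.exists_eq_add_of_le' hn
  rw [bRec]

lemma le_bRec {n k : ℕ} (hn : 3 ≤ n) (hk : k < n) :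
    (n - k).choose 2 * k + bRec k ≤ bRec n := by
  rw [bRec_of_three_le hn]
  exact Finset.le_sup (f := fun k : Finset.range n => (n - k.1).choose 2 * k.1 + bRec k.1)
    (Finset.mem_attach _ ⟨k, Finset.mem_range.mpr hk⟩)

lemma exists_bRec_eq {n : ℕ} (hn : 3 ≤ n) :
    ∃ k < n, bRec n = (n - k).choose 2 * k + bRec k := by
  obtain ⟨k, -, hk⟩ := Finset.exists_mem_eq_sup (Finset.range n).attach
    (Finset.attach_nonempty_iff.mpr (Finset.nonempty_range_iff.mpr (by omega)))
    (fun k => (n - k.1).choose 2 * k.1 + bRec k.1)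
  exact ⟨k.1, Finset.mem_range.mp k.2, (bRec_of_three_le hn).trans hk⟩

lemma cast_choose_two_sub_mul {n k : ℕ} (hk : k ≤ n) :
    (((n - k).choose 2 * k : ℕ) : ℝ) = ((n : ℝ) - k) * ((n - k) - 1) / 2 * k := by
  push_cast [Nat.cast_choose_two, Nat.cast_sub hk]
  ring

lemma three_halves_lt_sqrt_three : 3 / 2 < √3 :=
  Real.lt_sqrt_of_sq_lt (by norm_num)

lemma sqrt_three_lt_seven_quarters : √3 < 7 / 4 :=
  (Real.sqrt_lt' (by norm_num)).mpr (by norm_num)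

lemma cubic_gap_eq (N K : ℝ) :
    (2 * √3 - 3) * N ^ 3 - 3 * (N - K) ^ 2 * K - (2 * √3 - 3) * K ^ 3
      = √3 / 2 * (N - K) * (2 * K - (√3 - 1) * N) ^ 2 := by
  linear_combination (-2 * N * K ^ 2 + (√3 / 2 + 1) * N ^ 2 * K + (1 - √3 / 2) * N ^ 3)
    * Real.sq_sqrt (zero_le_three : (0 : ℝ) ≤ 3)

lemma split_le_cube {N K B : ℝ} (hK : 0 ≤ K) (hKN : K ≤ N)
    (hB : B ≤ (2 * √3 - 3) * K ^ 3 / 6) :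
    (N - K) * ((N - K) - 1) / 2 * K + B ≤ (2 * √3 - 3) * N ^ 3 / 6 := by
  have hgap : 0 ≤ √3 / 2 * (N - K) * (2 * K - (√3 - 1) * N) ^ 2 := by
    have : 0 ≤ N - K := by linarith
    positivity
  rw [← cubic_gap_eq] at hgap
  nlinarith [mul_nonneg (sub_nonneg.mpr hKN) hK]

lemma cube_sub_sq_le_split {N K B : ℝ} (hN : 1 ≤ N) (hK : 0 ≤ K)
    (hK_le : K ≤ (√3 - 1) / 2 * N) (hK_ge : (√3 - 1) / 2 * N - 1 ≤ K)
    (hB : (2 * √3 - 3) * K ^ 3 / 6 - K ^ 2 ≤ B) :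
    (2 * √3 - 3) * N ^ 3 / 6 - N ^ 2 ≤ (N - K) * ((N - K) - 1) / 2 * K + B := by
  have hs₁ := three_halves_lt_sqrt_three
  have hs₂ := sqrt_three_lt_seven_quarters
  have hK_le' : K ≤ 3 / 8 * N := by nlinarith
  have hNK : 0 ≤ N - K := by linarith
  have hD : (2 * K - (√3 - 1) * N) ^ 2 ≤ 4 := by
    calc (2 * K - (√3 - 1) * N) ^ 2 ≤ 2 ^ 2 := sq_le_sq' (by linarith) (by linarith)
      _ = 4 := by norm_num
  have hgap : √3 / 2 * (N - K) * (2 * K - (√3 - 1) * N) ^ 2 ≤ 4 * N := by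
    have h₁ : √3 / 2 * (N - K) ≤ N := by nlinarith
    calc √3 / 2 * (N - K) * (2 * K - (√3 - 1) * N) ^ 2 ≤ N * 4 := by
          gcongr
      _ = 4 * N := mul_comm _ _
  rw [← cubic_gap_eq] at hgap
  nlinarith [mul_le_mul_of_nonneg_left hK_le' (by linarith : 0 ≤ N),
    mul_le_mul hK_le' hK_le' hK (by linarith : 0 ≤ 3 / 8 * N)]

theorem bRec_le_cube (n : ℕ) : (bRec n : ℝ) ≤ (2 * √3 - 3) * n ^ 3 / 6 := by
  induction n using Nat.strong_induction_on with
  | _ n ih =>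
    rcases lt_or_ge n 3 with hn | hn
    · rw [bRec_of_lt_three hn, Nat.cast_zero]
      have : 0 ≤ 2 * √3 - 3 := by linarith [three_halves_lt_sqrt_three]
      positivity
    · obtain ⟨k, hk, hbk⟩ := exists_bRec_eq hn
      rw [hbk, Nat.cast_add, cast_choose_two_sub_mul hk.le]
      exact split_le_cube k.cast_nonneg (by exact_mod_cast hk.le) (ih k hk)

theorem cube_sub_sq_le_bRec (n : ℕ) : (2 * √3 - 3) * n ^ 3 / 6 - n ^ 2 ≤ (bRec n : ℝ) := by
  have hs₁ := three_halves_lt_sqrt_three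
  have hs₂ := sqrt_three_lt_seven_quarters
  induction n using Nat.strong_induction_on with
  | _ n ih =>
    rcases lt_or_ge n 3 with hn | hn
    · rw [bRec_of_lt_three hn, Nat.cast_zero]
      have : (n : ℝ) ≤ 2 := by exact_mod_cast Nat.lt_succ_iff.mp hn
      nlinarith [mul_nonneg (sq_nonneg (n : ℝ)) (by nlinarith : 0 ≤ 1 - (2 * √3 - 3) * n / 6)]
    · have hN : (3 : ℝ) ≤ n := by exact_mod_cast hn
      have hx : 0 ≤ (√3 - 1) / 2 * n := by
        have : 0 ≤ √3 - 1 := by linarith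
        positivity
      set k := ⌊(√3 - 1) / 2 * n⌋₊
      have hK_le : (k : ℝ) ≤ (√3 - 1) / 2 * n := Nat.floor_le hx
      have hK_ge : (√3 - 1) / 2 * n - 1 ≤ k := by
        linarith [Nat.lt_floor_add_one ((√3 - 1) / 2 * n)]
      have hk : k < n := Nat.cast_lt.mp (hK_le.trans_lt (by nlinarith))
      calc (2 * √3 - 3) * n ^ 3 / 6 - n ^ 2
          ≤ ((n : ℝ) - k) * ((n - k) - 1) / 2 * k + bRec k :=
            cube_sub_sq_le_split (by linarith) k.cast_nonneg hK_le hK_ge (ih k hk)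
        _ = (((n - k).choose 2 * k + bRec k : ℕ) : ℝ) := by
            rw [Nat.cast_add, cast_choose_two_sub_mul hk.le]
        _ ≤ bRec n := by exact_mod_cast le_bRec hn hk

theorem tendsto_bRec_div_cube :
    Tendsto (fun n : ℕ => (bRec n : ℝ) / (n ^ 3 / 6)) atTop (nhds (2 * √3 - 3)) := by
  have hlow :
      Tendsto (fun n : ℕ => 2 * √3 - 3 - 6 / (n : ℝ)) atTop (nhds (2 * √3 - 3)) := by
    simpa using tendsto_const_nhds.sub (tendsto_const_div_atTop_nhds_zero_nat (6 : ℝ))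
  refine tendsto_of_tendsto_of_tendsto_of_le_of_le' hlow tendsto_const_nhds ?_ ?_
  all_goals
    filter_upwards [eventually_gt_atTop 0] with n hn
    have hn : (0 : ℝ) < n := by exact_mod_cast hn
  · rw [le_div_iff₀ (by positivity)]
    have := cube_sub_sq_le_bRec n
    field_simp
    nlinarith
  · rw [div_le_iff₀ (by positivity)]
    linarith [bRec_le_cube n]

theorem stmt12 :
    Filter.Tendsto (fun n : ℕ => (bRec n : ℝ) / (n.choose 3))
      Filter.atTop (nhds (2 * Real.sqrt 3 - 3)) := by
  have hequiv : (fun n : ℕ => (bRec n : ℝ) / (n.choose 3)) ~[atTop]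
      (fun n : ℕ => (bRec n : ℝ) / (n ^ 3 / 6)) := by
    simpa [Pi.div_def, Nat.factorial] using IsEquivalent.refl.div (isEquivalent_choose 3)
  exact hequiv.tendsto_nhds_iff.mpr tendsto_bRec_div_cube
end

section
/- For all n ≥ 3, b_rec(n) ≥ (2*√3 - 3) * C(n,3) - c*n^2 for some absolute constant c (equivalently, liminf b_rec(n)/C(n,3) ≥ 2√3 - 3), where b_rec satisfies b_rec(n) = max_{n1+n2=n, n1 ≥ 1} [C(n1,2)*n2 + b_rec(n2)] with b_rec(0)=b_rec(1)=b_rec(2)=0. -/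
lemma bRec_ge (m x : ℕ) (hx : x < m + 3) :
    (m + 3 - x).choose 2 * x + bRec x ≤ bRec (m + 3) := by
  rw [bRec]
  exact Finset.le_sup (f := fun y : {y // y ∈ Finset.range (m + 3)} =>
    (m + 3 - y.1).choose 2 * y.1 + bRec y.1) (Finset.mem_attach _ ⟨x, Finset.mem_range.mpr hx⟩)

set_option maxHeartbeats 1000000 in
lemma aux : ∀ n : ℕ, (2 * Real.sqrt 3 - 3) * (n : ℝ) ^ 3 / 6 - (n : ℝ) ^ 2 ≤ bRec n := by
  have hs : (Real.sqrt 3) ^ 2 = 3 := Real.sq_sqrt (by norm_num)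
  have hs1 : (1.7 : ℝ) ≤ Real.sqrt 3 := by
    nlinarith [hs, Real.sqrt_nonneg 3]
  have hs2 : Real.sqrt 3 ≤ 1.8 := by
    nlinarith [hs, Real.sqrt_nonneg 3]
  set s := Real.sqrt 3 with hsdef
  intro n
  induction n using Nat.strong_induction_on with
  | _ n ih =>
    by_cases hsmall : n < 3
    · interval_cases n <;> simp [bRec] <;> nlinarith
    · push_neg at hsmall
      obtain ⟨m, rfl⟩ := Nat.exists_eq_add_of_le' hsmall
      set n := m + 3 with hn
      have hn3 : (3 : ℝ) ≤ (n : ℝ) := by exact_mod_cast hsmall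
      set t : ℕ := ⌈(3 - s) / 2 * n⌉₊ with ht
      have harg : (0:ℝ) ≤ (3 - s) / 2 * n := by nlinarith
      have hle : (3 - s) / 2 * n ≤ (t : ℝ) := Nat.le_ceil _
      have hlt : (t : ℝ) < (3 - s) / 2 * n + 1 := Nat.ceil_lt_add_one harg
      have ht1 : 1 ≤ t := by
        by_contra h
        push_neg at h
        interval_cases t
        · simp at hle; nlinarith
      have htn : t < n := by
        have : (t : ℝ) < (n : ℝ) := by nlinarith
        exact_mod_cast this
      set x : ℕ := n - t with hxdef
      have hxlt : x < n := by omega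
      have hxr : (x : ℝ) = (n : ℝ) - (t : ℝ) := by
        rw [hxdef]; push_cast [Nat.cast_sub htn.le]; ring
      have hnx : n - x = t := by omega
      have h1 := bRec_ge m x hxlt
      rw [hnx] at h1
      have h2 := ih x hxlt
      have hc2 : ((t.choose 2 : ℕ) : ℝ) = (t : ℝ) * ((t : ℝ) - 1) / 2 :=
        Nat.cast_choose_two (K := ℝ) t
      have h1' : ((t.choose 2 : ℕ) : ℝ) * (x : ℝ) + (bRec x : ℝ) ≤ (bRec n : ℝ) := by
        exact_mod_cast h1
      rw [hc2] at h1'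
      have key : (2 * s - 3) * (n : ℝ) ^ 3 / 6 - (n : ℝ) ^ 2 ≤
          (t : ℝ) * ((t : ℝ) - 1) / 2 * (x : ℝ) +
            ((2 * s - 3) * (x : ℝ) ^ 3 / 6 - (x : ℝ) ^ 2) := by
        obtain ⟨d, hd0, hd1, hT⟩ :
            ∃ d : ℝ, 0 ≤ d ∧ d ≤ 1 ∧ (t : ℝ) = (3 - s) / 2 * (n : ℝ) + d :=
          ⟨(t : ℝ) - (3 - s) / 2 * (n : ℝ), by linarith, by linarith, by ring⟩
        rw [hxr, hT]
        have hN0 : (0:ℝ) ≤ (n : ℝ) := by linarith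
        have hsX : (0:ℝ) ≤ s * ((n : ℝ) * (d * (1 - d))) :=
          mul_nonneg (by linarith) (mul_nonneg hN0 (mul_nonneg hd0 (by linarith)))
        have hNd2 : (0:ℝ) ≤ (n : ℝ) * d ^ 2 := mul_nonneg hN0 (sq_nonneg d)
        have hd3 : (0:ℝ) ≤ d ^ 3 := by positivity
        have hsd3 : s * d ^ 3 ≤ 1.8 * d ^ 3 := by nlinarith
        have hd3le : d ^ 3 ≤ 1 := by nlinarith
        have hd2le : d ^ 2 ≤ 1 := by nlinarith
        have hN9 : (9:ℝ) ≤ (n : ℝ) ^ 2 := by nlinarith [sq_nonneg ((n:ℝ) - 3)]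
        have expand :
            (((3 - s) / 2 * (n : ℝ) + d) * (((3 - s) / 2 * (n : ℝ) + d) - 1) / 2 *
                ((n : ℝ) - ((3 - s) / 2 * (n : ℝ) + d)) +
              ((2 * s - 3) * ((n : ℝ) - ((3 - s) / 2 * (n : ℝ) + d)) ^ 3 / 6 -
                ((n : ℝ) - ((3 - s) / 2 * (n : ℝ) + d)) ^ 2)) -
            ((2 * s - 3) * (n : ℝ) ^ 3 / 6 - (n : ℝ) ^ 2) =
            (1/2) * (s * ((n : ℝ) * (d * (1 - d)))) + (1/2) * ((n : ℝ) * d ^ 2) +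
              (3/4) * (n : ℝ) ^ 2 - (1/2) * d ^ 2 - (1/3) * (s * d ^ 3) := by
          linear_combination ((1/2) * (n : ℝ) * d ^ 2 - (1/8) * (n : ℝ) ^ 2 +
            (1/2) * (n : ℝ) ^ 2 * d - (1/4) * s * (n : ℝ) ^ 2 * d -
            (1/8) * s * (n : ℝ) ^ 3 + (1/24) * s ^ 2 * (n : ℝ) ^ 3) * hs
        linarith [expand, hsX, hNd2, hsd3, hd3le, hd2le, hN9]
      linarith

theorem stmt13 :
    ∃ c : ℝ, ∀ n : ℕ, 3 ≤ n →
      (2 * Real.sqrt 3 - 3) * (n.choose 3) - c * n ^ 2 ≤ (bRec n : ℝ) := by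
  refine ⟨1, fun n _ => ?_⟩
  have h1 := aux n
  have h2 : ((n.choose 3 : ℕ) : ℝ) ≤ (n : ℝ) ^ 3 / 6 := by
    have h := Nat.choose_le_pow_div (α := ℝ) 3 n
    norm_num [Nat.factorial] at h
    exact h
  have hs : (Real.sqrt 3) ^ 2 = 3 := Real.sq_sqrt (by norm_num)
  have hα : 0 ≤ 2 * Real.sqrt 3 - 3 := by nlinarith [Real.sqrt_nonneg 3]
  have h3 := mul_le_mul_of_nonneg_left h2 hα
  linarith
end

section
/- For every x2 ∈ [0, 1/2] and x1 = 1 - x2, we have 3 * x1^2 * x2 / (1 - x2^3) ≤ 2*√3 - 3 and (7 + x2^3) / (1 - x2^3) ≤ 57/7. -/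
theorem stmt16 (x2 : ℝ) (h0 : 0 ≤ x2) (h2 : x2 ≤ 1 / 2) :
    3 * (1 - x2) ^ 2 * x2 / (1 - x2 ^ 3) ≤ 2 * Real.sqrt 3 - 3 ∧
      (7 + x2 ^ 3) / (1 - x2 ^ 3) ≤ 57 / 7 := by
  have h3 : x2 ^ 3 ≤ 1 / 8 := by
    nlinarith [mul_nonneg h0 h0, sq_nonneg (x2 - 1/2), mul_nonneg (mul_nonneg h0 h0) h0]
  have hd : (0:ℝ) < 1 - x2 ^ 3 := by linarith
  have hs : Real.sqrt 3 ^ 2 = 3 := Real.sq_sqrt (by norm_num)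
  have hs1 : (1:ℝ) ≤ Real.sqrt 3 := by
    nlinarith [Real.sqrt_nonneg 3]
  constructor
  · rw [div_le_iff₀ hd]
    nlinarith [sq_nonneg (2 * Real.sqrt 3 * x2 + Real.sqrt 3 - 3), sq_nonneg x2,
      mul_nonneg (mul_nonneg h0 h0) h0, sq_nonneg (1 - x2)]
  · rw [div_le_iff₀ hd]
    nlinarith
end
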